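/- arXiv:1608.05814 — 4 statements merged into one kernel-verified Lean document; each statement's English description precedes it below -/
import Mathlib

section
/- Let ν ∈ ℝ and p ≥ 1. There exists a constant C(ν,p) > 0, depending only on ν and p, such that for every differentiable function f : [0,∞) → ℝ whose derivative Df satisfies f ∈ L^p_ν and Df ∈ L^p_ν, one has sup_{x ∈ [0,∞)} e^{νx} |f(x)|^p ≤ C(ν,p)^p (‖f‖_{ν,p} + ‖Df‖_{ν,p})^p. -/
/-!
On the unit interval `I = (x, x + 1]` the fundamental theorem of calculus, averaged over `I`,
gives `|f x| ≤ ∫_I |f| + ∫_I |Df|`; Jensen's inequality bounds each `∫_I |g|` by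
`(∫_I |g|^p)^(1/p)`, and on `I` the weight `e^{νy}` is at least `e^{-|ν|} e^{νx}`.
Hence `e^{νx/p} |f x| ≤ e^{|ν|/p} (‖f‖_{ν,p} + ‖Df‖_{ν,p})`, i.e. the claim with `C = e^{|ν|/p}`.
-/

open MeasureTheory Set Real

lemma MeasureTheory.Integrable.of_abs_rpow {α : Type*} [MeasurableSpace α] {μ : Measure α}
    [IsFiniteMeasure μ] {h : α → ℝ} {p : ℝ} (hp : 1 ≤ p) (hm : AEStronglyMeasurable h μ)
    (hi : Integrable (fun y => |h y| ^ p) μ) : Integrable h μ := by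
  have hp0 : 0 < p := zero_lt_one.trans_le hp
  have hLp : MemLp h (ENNReal.ofReal p) μ := by
    refine (integrable_norm_rpow_iff hm (by simpa using hp0) ENNReal.ofReal_ne_top).1 ?_
    simpa [ENNReal.toReal_ofReal hp0.le] using hi
  exact memLp_one_iff_integrable.1 (hLp.mono_exponent (by simpa using hp))

lemma integral_abs_le_integral_abs_rpow_rpow {α : Type*} [MeasurableSpace α] {μ : Measure α}
    [IsProbabilityMeasure μ] {h : α → ℝ} {p : ℝ} (hp : 1 ≤ p) (hm : AEStronglyMeasurable h μ)
    (hi : Integrable (fun y => |h y| ^ p) μ) :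
    ∫ y, |h y| ∂μ ≤ (∫ y, |h y| ^ p ∂μ) ^ (1 / p) := by
  have hp0 : 0 < p := zero_lt_one.trans_le hp
  have jensen : (∫ y, |h y| ∂μ) ^ p ≤ ∫ y, |h y| ^ p ∂μ :=
    (convexOn_rpow hp).map_integral_le (continuousOn_id.rpow_const fun _ _ => Or.inr hp0.le)
      isClosed_Ici (ae_of_all _ fun y => abs_nonneg (h y)) (hi.of_abs_rpow hp hm).abs hi
  rwa [one_div, le_rpow_inv_iff_of_pos (by positivity) (by positivity) hp0]

lemma MeasureTheory.IntegrableOn.of_mul_exp {G : ℝ → ℝ} {ν a b : ℝ}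
    (h : IntegrableOn (fun y => G y * exp (ν * y)) (Ioc a b)) : IntegrableOn G (Ioc a b) := by
  rw [← integrableOn_Icc_iff_integrableOn_Ioc] at h ⊢
  refine (h.mul_continuousOn (g' := fun y => exp (-(ν * y))) (by fun_prop) isCompact_Icc).congr_fun
    (fun y _ => ?_) measurableSet_Icc
  simp [mul_assoc, ← exp_add]

lemma exp_mul_le_exp_abs_mul_exp_mul {ν x y : ℝ} (hxy : |x - y| ≤ 1) :
    exp (ν * x) ≤ exp |ν| * exp (ν * y) := by
  rw [← exp_add, exp_le_exp]
  have : ν * (x - y) ≤ |ν| := by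
    calc ν * (x - y) ≤ |ν * (x - y)| := le_abs_self _
      _ = |ν| * |x - y| := abs_mul _ _
      _ ≤ |ν| := mul_le_of_le_one_right (abs_nonneg ν) hxy
  linarith

lemma exp_mul_setIntegral_Ioc_le {G : ℝ → ℝ} {ν x : ℝ} (hG : ∀ y, 0 ≤ G y) (hx : 0 ≤ x)
    (hi : IntegrableOn (fun y => G y * exp (ν * y)) (Ioi 0)) :
    exp (ν * x) * ∫ y in Ioc x (x + 1), G y ≤ exp |ν| * ∫ y in Ioi 0, G y * exp (ν * y) := by
  have hsub : Ioc x (x + 1) ⊆ Ioi 0 := fun y hy => hx.trans_lt hy.1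
  have hiI := hi.mono_set hsub
  rw [← integral_const_mul, ← integral_const_mul]
  calc ∫ y in Ioc x (x + 1), exp (ν * x) * G y
      ≤ ∫ y in Ioc x (x + 1), exp |ν| * (G y * exp (ν * y)) := by
        refine setIntegral_mono_on (hiI.of_mul_exp.const_mul _) (hiI.const_mul _)
          measurableSet_Ioc fun y hy => ?_
        have hxy : |x - y| ≤ 1 := by rw [abs_le]; constructor <;> linarith [hy.1, hy.2]
        calc exp (ν * x) * G y ≤ exp |ν| * exp (ν * y) * G y :=
              mul_le_mul_of_nonneg_right (exp_mul_le_exp_abs_mul_exp_mul hxy) (hG y)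
          _ = exp |ν| * (G y * exp (ν * y)) := by ring
    _ ≤ ∫ y in Ioi 0, exp |ν| * (G y * exp (ν * y)) :=
        setIntegral_mono_set (hi.const_mul _) (ae_of_all _ fun y => by positivity [hG y])
          hsub.eventuallyLE

lemma abs_le_setIntegral_Ioc_abs_add {f Df : ℝ → ℝ} {a : ℝ}
    (hf : ∀ y ∈ Icc a (a + 1), HasDerivAt f (Df y) y) (hDf : IntegrableOn Df (Ioc a (a + 1))) :
    |f a| ≤ (∫ y in Ioc a (a + 1), |f y|) + ∫ y in Ioc a (a + 1), |Df y| := by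
  set K := ∫ y in Ioc a (a + 1), |Df y|
  have hfI : IntegrableOn f (Ioc a (a + 1)) :=
    (ContinuousOn.integrableOn_Icc fun y hy => (hf y hy).continuousAt.continuousWithinAt).mono_set
      Ioc_subset_Icc_self
  have hpt : ∀ y ∈ Ioc a (a + 1), |f a| ≤ |f y| + K := by
    intro y hy
    have hIcc : Icc a y ⊆ Icc a (a + 1) := Icc_subset_Icc_right hy.2
    have hftc : ∫ t in a..y, Df t = f y - f a :=
      intervalIntegral.integral_eq_sub_of_hasDerivAt
        (fun t ht => hf t (hIcc (by rwa [uIcc_of_le hy.1.le] at ht)))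
        ((intervalIntegrable_iff_integrableOn_Ioc_of_le hy.1.le).2
          (hDf.mono_set (Ioc_subset_Ioc_right hy.2)))
    have hle : |f y - f a| ≤ K := by
      rw [← hftc, intervalIntegral.integral_of_le hy.1.le]
      exact (abs_integral_le_integral_abs).trans (setIntegral_mono_set hDf.abs
        (ae_of_all _ fun t => abs_nonneg _) (Ioc_subset_Ioc_right hy.2).eventuallyLE)
    linarith [abs_sub_abs_le_abs_sub (f a) (f y), abs_sub_comm (f a) (f y)]
  have hconst : ∀ c : ℝ, ∫ _ in Ioc a (a + 1), c = c := fun c => by simp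
  calc |f a| = ∫ _ in Ioc a (a + 1), |f a| := (hconst _).symm
    _ ≤ ∫ y in Ioc a (a + 1), (|f y| + K) :=
        setIntegral_mono_on (by simp) (hfI.abs.add (by simp)) measurableSet_Ioc hpt
    _ = (∫ y in Ioc a (a + 1), |f y|) + K := by rw [integral_add hfI.abs (by simp), hconst]

lemma exp_mul_div_mul_setIntegral_Ioc_abs_le {g : ℝ → ℝ} {ν p x : ℝ} (hp : 1 ≤ p) (hx : 0 ≤ x)
    (hg : AEStronglyMeasurable g) (hi : IntegrableOn (fun y => |g y| ^ p * exp (ν * y)) (Ioi 0)) :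
    exp (ν * x / p) * ∫ y in Ioc x (x + 1), |g y| ≤
      exp (|ν| / p) * (∫ y in Ioi 0, |g y| ^ p * exp (ν * y)) ^ (1 / p) := by
  have hp0 : 0 < p := zero_lt_one.trans_le hp
  have : IsProbabilityMeasure (volume.restrict (Ioc x (x + 1))) := ⟨by simp⟩
  have hexp : ∀ t, exp (t / p) = exp t ^ (1 / p) := fun t => by rw [← exp_mul]; ring_nf
  have hgpI : IntegrableOn (fun y => |g y| ^ p) (Ioc x (x + 1)) :=
    (hi.mono_set fun y hy => hx.trans_lt hy.1).of_mul_exp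
  calc exp (ν * x / p) * ∫ y in Ioc x (x + 1), |g y|
      ≤ exp (ν * x) ^ (1 / p) * (∫ y in Ioc x (x + 1), |g y| ^ p) ^ (1 / p) := by
        rw [hexp]
        gcongr
        exact integral_abs_le_integral_abs_rpow_rpow hp hg.restrict hgpI
    _ = (exp (ν * x) * ∫ y in Ioc x (x + 1), |g y| ^ p) ^ (1 / p) :=
        (mul_rpow (exp_pos _).le (by positivity)).symm
    _ ≤ (exp |ν| * ∫ y in Ioi 0, |g y| ^ p * exp (ν * y)) ^ (1 / p) :=
        rpow_le_rpow (by positivity) (exp_mul_setIntegral_Ioc_le (fun y => by positivity) hx hi)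
          (by positivity)
    _ = exp (|ν| / p) * (∫ y in Ioi 0, |g y| ^ p * exp (ν * y)) ^ (1 / p) := by
        rw [mul_rpow (exp_pos _).le (by positivity), hexp]

/-- For `ν ∈ ℝ` and `p ≥ 1` there is a constant `C(ν,p) > 0` such that for
every differentiable `f : [0,∞) → ℝ` with `f ∈ L^p_ν` and derivative `Df ∈ L^p_ν`,
`sup_{x ≥ 0} e^{νx} |f(x)|^p ≤ C(ν,p)^p ‖f‖_{W^{1,p}_ν}^p`
(with `‖f‖_{W^{1,p}_ν} = ‖f‖_{ν,p} + ‖Df‖_{ν,p}`). -/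
theorem stmt_3 (ν p : ℝ) (hp : 1 ≤ p) :
    ∃ C : ℝ, 0 < C ∧
      ∀ f Df : ℝ → ℝ, (∀ x, HasDerivAt f (Df x) x) →
        IntegrableOn (fun x => |f x| ^ p * Real.exp (ν * x)) (Ioi 0) →
        IntegrableOn (fun x => |Df x| ^ p * Real.exp (ν * x)) (Ioi 0) →
        ∀ x : ℝ, 0 ≤ x →
          Real.exp (ν * x) * |f x| ^ p ≤
            C ^ p *
              ((∫ y in Ioi (0 : ℝ), |f y| ^ p * Real.exp (ν * y)) ^ (1 / p) +
                  (∫ y in Ioi (0 : ℝ), |Df y| ^ p * Real.exp (ν * y)) ^ (1 / p)) ^ p := by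
  have hp0 : 0 < p := zero_lt_one.trans_le hp
  refine ⟨exp (|ν| / p), exp_pos _, fun f Df hf hIf hIDf x hx => ?_⟩
  set S := (∫ y in Ioi (0 : ℝ), |f y| ^ p * exp (ν * y)) ^ (1 / p) +
    (∫ y in Ioi (0 : ℝ), |Df y| ^ p * exp (ν * y)) ^ (1 / p)
  have hfm : AEStronglyMeasurable f :=
    (continuous_iff_continuousAt.2 fun y => (hf y).continuousAt).aestronglyMeasurable
  have hDfm : AEStronglyMeasurable Df := by
    rw [show Df = deriv f from funext fun y => (hf y).deriv.symm]
    exact (measurable_deriv f).aestronglyMeasurable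
  have hDfI : IntegrableOn Df (Ioc x (x + 1)) :=
    Integrable.of_abs_rpow hp hDfm.restrict (hIDf.mono_set fun y hy => hx.trans_lt hy.1).of_mul_exp
  have key : exp (ν * x / p) * |f x| ≤ exp (|ν| / p) * S :=
    calc exp (ν * x / p) * |f x|
        ≤ exp (ν * x / p) * ((∫ y in Ioc x (x + 1), |f y|) + ∫ y in Ioc x (x + 1), |Df y|) := by
          gcongr
          exact abs_le_setIntegral_Ioc_abs_add (fun y _ => hf y) hDfI
      _ ≤ exp (|ν| / p) * S := by
          rw [mul_add, mul_add]
          exact add_le_add (exp_mul_div_mul_setIntegral_Ioc_abs_le hp hx hfm hIf)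
            (exp_mul_div_mul_setIntegral_Ioc_abs_le hp hx hDfm hIDf)
  calc exp (ν * x) * |f x| ^ p = (exp (ν * x / p) * |f x|) ^ p := by
        rw [mul_rpow (exp_pos _).le (abs_nonneg _), ← exp_mul, div_mul_cancel₀ _ hp0.ne']
    _ ≤ (exp (|ν| / p) * S) ^ p := rpow_le_rpow (by positivity) key hp0.le
    _ = exp (|ν| / p) ^ p * S ^ p := mul_rpow (exp_pos _).le (by positivity)
end

section
/- Let ν > 0, p ≥ 2 and 1/p + 1/q = 1. Suppose there is a function ḡ ∈ L^p_ν such that ‖g(t,x,u)‖_H ≤ |ḡ(x)| for all t, x ∈ [0,∞) and u ∈ ℝ. Then for every t ≥ 0 and every measurable f ∈ L^p_ν, the function F(t,f) is well defined, belongs to L^p_ν, and satisfies ‖F(t,f)‖_{ν,p} ≤ (p/(νq))^{1/q} ‖ḡ‖²_{ν,p}. -/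
open MeasureTheory Set Real

/-- The HJMM drift: `F(t,f)(x) = ⟨ g(t,x,f(x)), ∫_0^x g(t,y,f(y)) dy ⟩_H`. -/
noncomputable def hjmDrift {H : Type*} [NormedAddCommGroup H] [InnerProductSpace ℝ H]
    (g : ℝ → ℝ → ℝ → H) (t : ℝ) (f : ℝ → ℝ) (x : ℝ) : ℝ :=
  @inner ℝ H _ (g t x (f x)) (∫ y in Ioc (0 : ℝ) x, g t y (f y))

/-!
Hölder's inequality against the weight `e^{νx}` embeds `L^p_ν` into `L¹(0, ∞)`:
`∫₀^∞ |h| ≤ (p/(νq))^{1/q} ‖h‖_{ν,p}`, the constant being `‖e^{-νx/p}‖_{L^q}`.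
So the primitive `x ↦ ∫₀^x g(t,y,f(y)) dy` is continuous and bounded in `H` by
`C = (p/(νq))^{1/q} ‖ḡ‖_{ν,p}`, and Cauchy–Schwarz gives `|F(t,f)(x)| ≤ C |ḡ(x)|`;
taking `L^p_ν` norms yields `‖F(t,f)‖_{ν,p} ≤ C ‖ḡ‖_{ν,p}`.
-/

lemma memLp_ofReal_of_integrable_abs_rpow {α : Type*} [MeasurableSpace α] {μ : Measure α}
    {f : α → ℝ} {r : ℝ} (hr : 0 < r) (hf : AEStronglyMeasurable f μ)
    (h : Integrable (fun x => |f x| ^ r) μ) : MemLp f (ENNReal.ofReal r) μ := by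
  rw [← integrable_norm_rpow_iff hf (by simpa using hr) ENNReal.ofReal_ne_top,
    ENNReal.toReal_ofReal hr.le]
  simpa only [Real.norm_eq_abs] using h

lemma mul_rpow_mul_inv_rpow (a : ℝ) {b : ℝ} (hb : 0 < b) (r : ℝ) : a * b ^ r * b⁻¹ ^ r = a := by
  rw [mul_assoc, ← mul_rpow hb.le (inv_nonneg.2 hb.le), mul_inv_cancel₀ hb.ne', one_rpow, mul_one]

lemma mul_rpow_one_div_rpow {a b p : ℝ} (ha : 0 ≤ a) (hb : 0 ≤ b) (hp : p ≠ 0) :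
    (a * b ^ (1 / p)) ^ p = a ^ p * b := by
  rw [mul_rpow ha (rpow_nonneg hb _), ← rpow_mul hb, one_div_mul_cancel hp, rpow_one]

lemma rpow_one_div_rpow {b : ℝ} (hb : 0 ≤ b) (p q : ℝ) : (b ^ (1 / p)) ^ q = b ^ (q / p) := by
  rw [← rpow_mul hb, one_div_mul_eq_div]

section WeightedHolder

variable {α : Type*} [MeasurableSpace α] {μ : Measure α} {p q : ℝ} {h w : α → ℝ}

lemma memLp_abs_mul_rpow_weight (hp : 0 < p) (hh : AEStronglyMeasurable h μ)
    (hwm : AEStronglyMeasurable w μ) (hw : ∀ x, 0 < w x)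
    (hhw : Integrable (fun x => |h x| ^ p * w x) μ) :
    MemLp (fun x => |h x| * w x ^ (1 / p)) (ENNReal.ofReal p) μ := by
  refine memLp_ofReal_of_integrable_abs_rpow hp
    (hh.aemeasurable.abs.mul (hwm.aemeasurable.pow_const _)).aestronglyMeasurable ?_
  convert hhw using 2 with x
  rw [abs_of_nonneg (by have := hw x; positivity),
    mul_rpow_one_div_rpow (abs_nonneg _) (hw x).le hp.ne']

lemma memLp_inv_rpow_weight (hq : 0 < q) (hwm : AEStronglyMeasurable w μ) (hw : ∀ x, 0 < w x)
    (hw' : Integrable (fun x => (w x)⁻¹ ^ (q / p)) μ) :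
    MemLp (fun x => (w x)⁻¹ ^ (1 / p)) (ENNReal.ofReal q) μ := by
  refine memLp_ofReal_of_integrable_abs_rpow hq
    (hwm.aemeasurable.inv.pow_const _).aestronglyMeasurable ?_
  convert hw' using 2 with x
  rw [abs_of_nonneg (by have := hw x; positivity), rpow_one_div_rpow (inv_nonneg.2 (hw x).le)]

lemma integrable_of_integrable_abs_rpow_mul_weight (hpq : p.HolderConjugate q)
    (hh : AEStronglyMeasurable h μ) (hwm : AEStronglyMeasurable w μ) (hw : ∀ x, 0 < w x)
    (hhw : Integrable (fun x => |h x| ^ p * w x) μ)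
    (hw' : Integrable (fun x => (w x)⁻¹ ^ (q / p)) μ) : Integrable h μ := by
  have := hpq.ennrealOfReal
  rw [← integrable_norm_iff hh]
  convert (memLp_abs_mul_rpow_weight hpq.pos hh hwm hw hhw).integrable_mul
    (memLp_inv_rpow_weight hpq.symm.pos hwm hw hw') using 1
  funext x
  exact (mul_rpow_mul_inv_rpow _ (hw x) _).symm

lemma integral_abs_le_of_integrable_abs_rpow_mul_weight (hpq : p.HolderConjugate q)
    (hh : AEStronglyMeasurable h μ) (hwm : AEStronglyMeasurable w μ) (hw : ∀ x, 0 < w x)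
    (hhw : Integrable (fun x => |h x| ^ p * w x) μ)
    (hw' : Integrable (fun x => (w x)⁻¹ ^ (q / p)) μ) :
    ∫ x, |h x| ∂μ ≤
      (∫ x, |h x| ^ p * w x ∂μ) ^ (1 / p) * (∫ x, (w x)⁻¹ ^ (q / p) ∂μ) ^ (1 / q) := by
  calc ∫ x, |h x| ∂μ = ∫ x, (|h x| * w x ^ (1 / p)) * (w x)⁻¹ ^ (1 / p) ∂μ :=
        integral_congr_ae (.of_forall fun x => (mul_rpow_mul_inv_rpow _ (hw x) _).symm)
    _ ≤ (∫ x, (|h x| * w x ^ (1 / p)) ^ p ∂μ) ^ (1 / p) *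
          (∫ x, ((w x)⁻¹ ^ (1 / p)) ^ q ∂μ) ^ (1 / q) :=
        integral_mul_le_Lp_mul_Lq_of_nonneg hpq (.of_forall fun x => by have := hw x; positivity)
          (.of_forall fun x => by have := hw x; positivity)
          (memLp_abs_mul_rpow_weight hpq.pos hh hwm hw hhw)
          (memLp_inv_rpow_weight hpq.symm.pos hwm hw hw')
    _ = _ := by
      simp only [mul_rpow_one_div_rpow (abs_nonneg _) (hw _).le hpq.ne_zero,
        rpow_one_div_rpow (inv_nonneg.2 (hw _).le)]

end WeightedHolder

lemma inv_exp_mul_rpow (a b x : ℝ) : (exp (a * x))⁻¹ ^ b = exp (-(a * b) * x) := by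
  rw [← exp_neg, ← exp_mul]
  ring_nf

lemma integrableOn_Ioi_inv_exp_mul_rpow {a b : ℝ} (hab : 0 < a * b) :
    IntegrableOn (fun x => (exp (a * x))⁻¹ ^ b) (Ioi 0) := by
  simpa only [inv_exp_mul_rpow] using exp_neg_integrableOn_Ioi 0 hab

lemma integral_Ioi_inv_exp_mul_rpow {a b : ℝ} (hab : 0 < a * b) :
    ∫ x in Ioi (0 : ℝ), (exp (a * x))⁻¹ ^ b = (a * b)⁻¹ := by
  simp only [inv_exp_mul_rpow]
  rw [integral_exp_mul_Ioi (by linarith) 0]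
  field_simp
  simp

section ExpWeight

variable {ν p q : ℝ} {h : ℝ → ℝ}

lemma integrableOn_Ioi_of_integrableOn_abs_rpow_mul_exp (hν : 0 < ν) (hpq : p.HolderConjugate q)
    (hh : AEStronglyMeasurable h (volume.restrict (Ioi 0)))
    (hhw : IntegrableOn (fun x => |h x| ^ p * exp (ν * x)) (Ioi 0)) : IntegrableOn h (Ioi 0) :=
  integrable_of_integrable_abs_rpow_mul_weight hpq hh
    (by fun_prop : Continuous fun x => exp (ν * x)).aestronglyMeasurable (fun _ => exp_pos _) hhw
    (integrableOn_Ioi_inv_exp_mul_rpow (by have := hpq.pos; have := hpq.symm.pos; positivity))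

lemma integral_Ioi_abs_le_of_integrableOn_abs_rpow_mul_exp (hν : 0 < ν)
    (hpq : p.HolderConjugate q) (hh : AEStronglyMeasurable h (volume.restrict (Ioi 0)))
    (hhw : IntegrableOn (fun x => |h x| ^ p * exp (ν * x)) (Ioi 0)) :
    ∫ x in Ioi 0, |h x| ≤
      (p / (ν * q)) ^ (1 / q) * (∫ x in Ioi 0, |h x| ^ p * exp (ν * x)) ^ (1 / p) := by
  have hνqp : 0 < ν * (q / p) := by have := hpq.pos; have := hpq.symm.pos; positivity
  have hbound := integral_abs_le_of_integrable_abs_rpow_mul_weight hpq hh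
    (by fun_prop : Continuous fun x => exp (ν * x)).aestronglyMeasurable (fun _ => exp_pos _) hhw
    (integrableOn_Ioi_inv_exp_mul_rpow hνqp)
  rwa [integral_Ioi_inv_exp_mul_rpow hνqp, mul_comm, mul_div_assoc', inv_div] at hbound

end ExpWeight

section Domination

variable {α : Type*} [MeasurableSpace α] {μ : Measure α} {φ ψ w : α → ℝ} {c p : ℝ}

lemma abs_rpow_mul_le_of_abs_le_mul {a b c w p : ℝ} (hp : 0 ≤ p) (hc : 0 ≤ c) (hw : 0 ≤ w)
    (hab : |a| ≤ c * |b|) : |a| ^ p * w ≤ c ^ p * (|b| ^ p * w) :=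
  calc |a| ^ p * w ≤ (c * |b|) ^ p * w :=
        mul_le_mul_of_nonneg_right (rpow_le_rpow (abs_nonneg _) hab hp) hw
    _ = c ^ p * (|b| ^ p * w) := by rw [mul_rpow hc (abs_nonneg _)]; ring

lemma integrable_abs_rpow_mul_of_abs_le_mul (hp : 0 ≤ p) (hc : 0 ≤ c)
    (hφ : AEStronglyMeasurable φ μ) (hwm : AEStronglyMeasurable w μ) (hw : ∀ x, 0 ≤ w x)
    (hψ : Integrable (fun x => |ψ x| ^ p * w x) μ) (hle : ∀ᵐ x ∂μ, |φ x| ≤ c * |ψ x|) :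
    Integrable (fun x => |φ x| ^ p * w x) μ :=
  (hψ.const_mul (c ^ p)).mono'
    ((hφ.aemeasurable.abs.pow_const p).mul hwm.aemeasurable).aestronglyMeasurable
    (hle.mono fun x hx => by
      rw [Real.norm_of_nonneg (by have := hw x; positivity)]
      exact abs_rpow_mul_le_of_abs_le_mul hp hc (hw x) hx)

lemma integral_abs_rpow_mul_rpow_le_of_abs_le_mul (hp : 0 < p) (hc : 0 ≤ c)
    (hφ : AEStronglyMeasurable φ μ) (hwm : AEStronglyMeasurable w μ) (hw : ∀ x, 0 ≤ w x)
    (hψ : Integrable (fun x => |ψ x| ^ p * w x) μ) (hle : ∀ᵐ x ∂μ, |φ x| ≤ c * |ψ x|) :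
    (∫ x, |φ x| ^ p * w x ∂μ) ^ (1 / p) ≤ c * (∫ x, |ψ x| ^ p * w x ∂μ) ^ (1 / p) := by
  have hψ0 : 0 ≤ ∫ x, |ψ x| ^ p * w x ∂μ :=
    integral_nonneg fun x => by have := hw x; positivity
  calc (∫ x, |φ x| ^ p * w x ∂μ) ^ (1 / p) ≤ (∫ x, c ^ p * (|ψ x| ^ p * w x) ∂μ) ^ (1 / p) :=
        rpow_le_rpow (integral_nonneg fun x => by have := hw x; positivity)
          (integral_mono_ae
            (integrable_abs_rpow_mul_of_abs_le_mul hp.le hc hφ hwm hw hψ hle)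
            (hψ.const_mul _)
            (hle.mono fun x hx => abs_rpow_mul_le_of_abs_le_mul hp.le hc (hw x) hx))
          (by positivity)
    _ = c * (∫ x, |ψ x| ^ p * w x ∂μ) ^ (1 / p) := by
      rw [integral_const_mul, mul_rpow (by positivity) hψ0, ← rpow_mul hc,
        mul_one_div_cancel hp.ne', rpow_one]

end Domination

lemma continuous_integral_Ioc_of_integrableOn_Ioi {E : Type*} [NormedAddCommGroup E]
    [NormedSpace ℝ E] {G : ℝ → E} {a : ℝ} (hG : IntegrableOn G (Ioi a)) :
    Continuous fun x => ∫ y in Ioc a x, G y := by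
  have hprim : (fun x => ∫ y in Ioc a x, G y) = fun x => ∫ y in a..x, (Ioi a).indicator G y := by
    funext x
    rcases le_total a x with hax | hxa
    · rw [intervalIntegral.integral_of_le hax, setIntegral_indicator measurableSet_Ioi,
        Ioc_inter_Ioi, max_self]
    · rw [intervalIntegral.integral_of_ge hxa, setIntegral_indicator measurableSet_Ioi,
        Ioc_eq_empty (not_lt.2 hxa)]
      simp
  rw [hprim]
  exact (hG.integrable_indicator measurableSet_Ioi).continuous_primitive a

lemma norm_integral_Ioc_le_of_norm_le_abs {E : Type*} [NormedAddCommGroup E] [NormedSpace ℝ E]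
    {ν p q : ℝ} (hν : 0 < ν) (hpq : p.HolderConjugate q) {G : ℝ → E} {h : ℝ → ℝ}
    (hh : AEStronglyMeasurable h (volume.restrict (Ioi 0)))
    (hhw : IntegrableOn (fun x => |h x| ^ p * exp (ν * x)) (Ioi 0))
    (hG : ∀ y ∈ Ioi (0 : ℝ), ‖G y‖ ≤ |h y|) (x : ℝ) :
    ‖∫ y in Ioc 0 x, G y‖ ≤
      (p / (ν * q)) ^ (1 / q) * (∫ y in Ioi 0, |h y| ^ p * exp (ν * y)) ^ (1 / p) := by
  have hh1 : IntegrableOn (fun y => |h y|) (Ioi 0) :=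
    (integrableOn_Ioi_of_integrableOn_abs_rpow_mul_exp hν hpq hh hhw).abs
  calc ‖∫ y in Ioc 0 x, G y‖ ≤ ∫ y in Ioc 0 x, |h y| :=
        norm_integral_le_of_norm_le (hh1.mono_set Ioc_subset_Ioi_self)
          (ae_restrict_of_forall_mem measurableSet_Ioc fun y hy => hG y hy.1)
    _ ≤ ∫ y in Ioi 0, |h y| :=
        setIntegral_mono_set hh1 (.of_forall fun _ => abs_nonneg _) Ioc_subset_Ioi_self.eventuallyLE
    _ ≤ _ := integral_Ioi_abs_le_of_integrableOn_abs_rpow_mul_exp hν hpq hh hhw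

section Drift

variable {H : Type*} [NormedAddCommGroup H] [InnerProductSpace ℝ H] {g : ℝ → ℝ → ℝ → H} {t : ℝ}
  {f : ℝ → ℝ}

lemma stronglyMeasurable_hjmDrift (hG : StronglyMeasurable fun y => g t y (f y))
    (hGi : IntegrableOn (fun y => g t y (f y)) (Ioi 0)) : StronglyMeasurable (hjmDrift g t f) :=
  hG.inner (continuous_integral_Ioc_of_integrableOn_Ioi hGi).stronglyMeasurable

lemma abs_hjmDrift_le {ν p q : ℝ} (hν : 0 < ν) (hpq : p.HolderConjugate q) {gbar : ℝ → ℝ}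
    (hgbarm : AEStronglyMeasurable gbar (volume.restrict (Ioi 0)))
    (hgbar : IntegrableOn (fun x => |gbar x| ^ p * exp (ν * x)) (Ioi 0))
    (hb : ∀ y ∈ Ioi (0 : ℝ), ‖g t y (f y)‖ ≤ |gbar y|) {x : ℝ} (hx : x ∈ Ioi 0) :
    |hjmDrift g t f x| ≤
      (p / (ν * q)) ^ (1 / q) * (∫ y in Ioi 0, |gbar y| ^ p * exp (ν * y)) ^ (1 / p) * |gbar x| :=
  calc |hjmDrift g t f x| ≤ ‖g t x (f x)‖ * ‖∫ y in Ioc 0 x, g t y (f y)‖ :=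
        abs_real_inner_le_norm _ _
    _ ≤ |gbar x| * ((p / (ν * q)) ^ (1 / q) *
          (∫ y in Ioi 0, |gbar y| ^ p * exp (ν * y)) ^ (1 / p)) :=
        mul_le_mul (hb x hx) (norm_integral_Ioc_le_of_norm_le_abs hν hpq hgbarm hgbar hb x)
          (norm_nonneg _) (abs_nonneg _)
    _ = _ := mul_comm _ _

end Drift

theorem stmt_5_general {H : Type*} [NormedAddCommGroup H] [InnerProductSpace ℝ H]
    (ν p q : ℝ) (hν : 0 < ν) (hp : 2 ≤ p) (hpq : 1 / p + 1 / q = 1)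
    (g : ℝ → ℝ → ℝ → H)
    (hgm : StronglyMeasurable fun z : ℝ × ℝ × ℝ => g z.1 z.2.1 z.2.2)
    (gbar : ℝ → ℝ) (hgbarm : Measurable gbar)
    (hgbar : IntegrableOn (fun x => |gbar x| ^ p * Real.exp (ν * x)) (Ioi 0))
    (hb : ∀ t x u : ℝ, 0 ≤ t → 0 ≤ x → ‖g t x u‖ ≤ |gbar x|)
    (t : ℝ) (ht : 0 ≤ t) (f : ℝ → ℝ) (hfm : Measurable f) :
    (∀ x : ℝ, 0 ≤ x → IntegrableOn (fun y => g t y (f y)) (Ioc 0 x)) ∧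
      IntegrableOn (fun x => |hjmDrift g t f x| ^ p * Real.exp (ν * x)) (Ioi 0) ∧
      (∫ x in Ioi (0 : ℝ), |hjmDrift g t f x| ^ p * Real.exp (ν * x)) ^ (1 / p) ≤
        (p / (ν * q)) ^ (1 / q) *
          ((∫ x in Ioi (0 : ℝ), |gbar x| ^ p * Real.exp (ν * x)) ^ (1 / p)) ^ 2 := by
  have hpq' : p.HolderConjugate q :=
    Real.holderConjugate_iff.2 ⟨by linarith, by simpa only [one_div] using hpq⟩
  have hC : 0 ≤ (p / (ν * q)) ^ (1 / q) *
      (∫ x in Ioi (0 : ℝ), |gbar x| ^ p * exp (ν * x)) ^ (1 / p) := by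
    have := hpq'.pos; have := hpq'.symm.pos
    positivity
  have hGm : StronglyMeasurable fun y => g t y (f y) :=
    hgm.comp_measurable (measurable_const.prodMk (measurable_id.prodMk hfm))
  have hGle : ∀ y ∈ Ioi (0 : ℝ), ‖g t y (f y)‖ ≤ |gbar y| := fun y hy => hb t y (f y) ht hy.le
  have hGi : IntegrableOn (fun y => g t y (f y)) (Ioi 0) :=
    (integrableOn_Ioi_of_integrableOn_abs_rpow_mul_exp hν hpq' hgbarm.aestronglyMeasurable
      hgbar).norm.mono' hGm.aestronglyMeasurable (ae_restrict_of_forall_mem measurableSet_Ioi hGle)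
  have hdrift := ae_restrict_of_forall_mem (μ := volume) measurableSet_Ioi fun x hx =>
    abs_hjmDrift_le hν hpq' hgbarm.aestronglyMeasurable hgbar hGle hx
  have hFm := (stronglyMeasurable_hjmDrift hGm hGi).aestronglyMeasurable
    (μ := volume.restrict (Ioi 0))
  have hexp : AEStronglyMeasurable (fun x => exp (ν * x)) (volume.restrict (Ioi 0)) :=
    (by fun_prop : Continuous fun x => exp (ν * x)).aestronglyMeasurable
  refine ⟨fun x _ => hGi.mono_set Ioc_subset_Ioi_self,
    integrable_abs_rpow_mul_of_abs_le_mul (by linarith) hC hFm hexp (fun _ => (exp_pos _).le)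
      hgbar hdrift, ?_⟩
  calc _ ≤ _ := integral_abs_rpow_mul_rpow_le_of_abs_le_mul (by linarith) hC hFm hexp
          (fun _ => (exp_pos _).le) hgbar hdrift
    _ = _ := by ring

/-- Under the pointwise bound `‖g(t,x,u)‖_H ≤ |ḡ(x)|` with `ḡ ∈ L^p_ν`,
for every `t ≥ 0` and measurable `f ∈ L^p_ν` the function `F(t,f)` is well defined,
belongs to `L^p_ν`, and `‖F(t,f)‖_{ν,p} ≤ (p/(νq))^{1/q} ‖ḡ‖²_{ν,p}`. -/
theorem stmt_5 {H : Type*} [NormedAddCommGroup H] [InnerProductSpace ℝ H]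
    [CompleteSpace H] [TopologicalSpace.SeparableSpace H]
    (ν p q : ℝ) (hν : 0 < ν) (hp : 2 ≤ p) (hpq : 1 / p + 1 / q = 1)
    (g : ℝ → ℝ → ℝ → H)
    (hgm : StronglyMeasurable fun z : ℝ × ℝ × ℝ => g z.1 z.2.1 z.2.2)
    (gbar : ℝ → ℝ) (hgbarm : Measurable gbar)
    (hgbar : IntegrableOn (fun x => |gbar x| ^ p * Real.exp (ν * x)) (Ioi 0))
    (hb : ∀ t x u : ℝ, 0 ≤ t → 0 ≤ x → ‖g t x u‖ ≤ |gbar x|)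
    (t : ℝ) (ht : 0 ≤ t) (f : ℝ → ℝ) (hfm : Measurable f)
    (hf : IntegrableOn (fun x => |f x| ^ p * Real.exp (ν * x)) (Ioi 0)) :
    (∀ x : ℝ, 0 ≤ x → IntegrableOn (fun y => g t y (f y)) (Ioc 0 x)) ∧
      IntegrableOn (fun x => |hjmDrift g t f x| ^ p * Real.exp (ν * x)) (Ioi 0) ∧
      (∫ x in Ioi (0 : ℝ), |hjmDrift g t f x| ^ p * Real.exp (ν * x)) ^ (1 / p) ≤
        (p / (ν * q)) ^ (1 / q) *
          ((∫ x in Ioi (0 : ℝ), |gbar x| ^ p * Real.exp (ν * x)) ^ (1 / p)) ^ 2 :=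
  stmt_5_general ν p q hν hp hpq g hgm gbar hgbarm hgbar hb t ht f hfm
end

section
/- Let ν > 0, p ≥ 2 and 1/p + 1/q = 1. Suppose there is a function ḡ ∈ L^p_ν such that ‖g(t,x,u)‖_H ≤ |ḡ(x)| for all t, x ∈ [0,∞) and u ∈ ℝ. Then for every t ≥ 0, every measurable f ∈ L^p_ν and every x ∈ [0,∞), |F(t,f)(x)| ≤ (p/(νq))^{1/q} ‖ḡ‖_{ν,p} |ḡ(x)|. -/
/-! Writing `|ḡ| = (|ḡ| e^{νy/p}) · e^{-νy/p}`, Hölder's inequality on `(0, x]` bounds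
`∫_0^x |ḡ|` by `‖ḡ‖_{ν,p}` times `(∫_0^∞ e^{-νqy/p} dy)^{1/q} = (p/(νq))^{1/q}`; the drift is at
most `|ḡ(x)|` times this integral by Cauchy–Schwarz. -/

open MeasureTheory Set Real

section WeightedHolder

variable {α : Type*} [MeasurableSpace α] {μ : Measure α} {p q : ℝ} {u w : α → ℝ}

lemma memLp_ofReal_of_integrable_rpow {F : α → ℝ} (hp : 0 < p) (hF : AEStronglyMeasurable F μ)
    (hF0 : ∀ a, 0 ≤ F a) (h : Integrable (fun a => F a ^ p) μ) :
    MemLp F (ENNReal.ofReal p) μ := by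
  refine (integrable_norm_rpow_iff hF (by simpa using hp) ENNReal.ofReal_ne_top).1 ?_
  simpa [Real.norm_of_nonneg (hF0 _), ENNReal.toReal_ofReal hp.le] using h

lemma abs_mul_rpow_inv_rpow (x : ℝ) {y : ℝ} (hy : 0 ≤ y) (hp : p ≠ 0) :
    (|x| * y ^ p⁻¹) ^ p = |x| ^ p * y := by
  rw [mul_rpow (abs_nonneg x) (rpow_nonneg hy _), ← rpow_mul hy, inv_mul_cancel₀ hp, rpow_one]

lemma rpow_neg_inv_rpow {y : ℝ} (hy : 0 ≤ y) (p q : ℝ) : (y ^ (-p⁻¹)) ^ q = y ^ (-(q / p)) := by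
  rw [← rpow_mul hy]
  ring_nf

lemma memLp_abs_mul_rpow_inv (hp : 0 < p) (hu : AEMeasurable u μ) (hw : AEMeasurable w μ)
    (hw0 : ∀ a, 0 ≤ w a) (h : Integrable (fun a => |u a| ^ p * w a) μ) :
    MemLp (fun a => |u a| * w a ^ p⁻¹) (ENNReal.ofReal p) μ :=
  memLp_ofReal_of_integrable_rpow hp (hu.abs.mul (hw.pow_const _)).aestronglyMeasurable
    (fun a => mul_nonneg (abs_nonneg _) (rpow_nonneg (hw0 a) _))
    (h.congr (.of_forall fun a => (abs_mul_rpow_inv_rpow _ (hw0 a) hp.ne').symm))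

lemma memLp_rpow_neg_inv (hq : 0 < q) (hw : AEMeasurable w μ) (hw0 : ∀ a, 0 ≤ w a)
    (h : Integrable (fun a => w a ^ (-(q / p))) μ) :
    MemLp (fun a => w a ^ (-p⁻¹)) (ENNReal.ofReal q) μ :=
  memLp_ofReal_of_integrable_rpow hq (hw.pow_const _).aestronglyMeasurable
    (fun a => rpow_nonneg (hw0 a) _)
    (h.congr (.of_forall fun a => (rpow_neg_inv_rpow (hw0 a) p q).symm))

lemma abs_eq_mul_rpow_inv_mul_rpow_neg_inv (x : ℝ) {y : ℝ} (hy : 0 < y) (p : ℝ) :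
    |x| = |x| * y ^ p⁻¹ * y ^ (-p⁻¹) := by
  rw [mul_assoc, ← rpow_add hy, add_neg_cancel, rpow_zero, mul_one]

lemma integrable_abs_of_integrable_rpow_mul_weight (hpq : p.HolderConjugate q)
    (hu : AEMeasurable u μ) (hw : AEMeasurable w μ) (hw_pos : ∀ a, 0 < w a)
    (hup : Integrable (fun a => |u a| ^ p * w a) μ)
    (hwq : Integrable (fun a => w a ^ (-(q / p))) μ) :
    Integrable (fun a => |u a|) μ := by
  have := hpq.ennrealOfReal
  refine ((memLp_abs_mul_rpow_inv hpq.pos hu hw (fun a => (hw_pos a).le) hup).integrable_mul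
    (memLp_rpow_neg_inv hpq.symm.pos hw (fun a => (hw_pos a).le) hwq)).congr (.of_forall fun a => ?_)
  exact (abs_eq_mul_rpow_inv_mul_rpow_neg_inv _ (hw_pos a) p).symm

lemma integral_abs_le_of_integrable_rpow_mul_weight (hpq : p.HolderConjugate q)
    (hu : AEMeasurable u μ) (hw : AEMeasurable w μ) (hw_pos : ∀ a, 0 < w a)
    (hup : Integrable (fun a => |u a| ^ p * w a) μ)
    (hwq : Integrable (fun a => w a ^ (-(q / p))) μ) :
    ∫ a, |u a| ∂μ ≤
      (∫ a, w a ^ (-(q / p)) ∂μ) ^ (1 / q) * (∫ a, |u a| ^ p * w a ∂μ) ^ (1 / p) := by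
  have hw0 a := (hw_pos a).le
  calc ∫ a, |u a| ∂μ = ∫ a, |u a| * w a ^ p⁻¹ * w a ^ (-p⁻¹) ∂μ :=
        integral_congr_ae (.of_forall fun a => abs_eq_mul_rpow_inv_mul_rpow_neg_inv _ (hw_pos a) p)
    _ ≤ (∫ a, (|u a| * w a ^ p⁻¹) ^ p ∂μ) ^ (1 / p) * (∫ a, (w a ^ (-p⁻¹)) ^ q ∂μ) ^ (1 / q) :=
        integral_mul_le_Lp_mul_Lq_of_nonneg hpq
          (.of_forall fun a => mul_nonneg (abs_nonneg _) (rpow_nonneg (hw0 a) _))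
          (.of_forall fun a => rpow_nonneg (hw0 a) _)
          (memLp_abs_mul_rpow_inv hpq.pos hu hw hw0 hup) (memLp_rpow_neg_inv hpq.symm.pos hw hw0 hwq)
    _ = (∫ a, w a ^ (-(q / p)) ∂μ) ^ (1 / q) * (∫ a, |u a| ^ p * w a ∂μ) ^ (1 / p) := by
        simp only [abs_mul_rpow_inv_rpow _ (hw0 _) hpq.ne_zero, rpow_neg_inv_rpow (hw0 _)]
        ring

end WeightedHolder

lemma exp_mul_rpow_neg (ν c y : ℝ) : exp (ν * y) ^ (-c) = exp (-(ν * c) * y) := by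
  rw [← exp_mul]
  ring_nf

lemma integrableOn_exp_mul_rpow_neg_Ioi {ν c : ℝ} (hνc : 0 < ν * c) :
    IntegrableOn (fun y => exp (ν * y) ^ (-c)) (Ioi 0) := by
  simpa only [exp_mul_rpow_neg] using integrableOn_exp_mul_Ioi (neg_neg_of_pos hνc) 0

lemma setIntegral_Ioc_exp_mul_rpow_neg_le {ν c : ℝ} (hνc : 0 < ν * c) (x : ℝ) :
    ∫ y in Ioc 0 x, exp (ν * y) ^ (-c) ≤ 1 / (ν * c) := by
  calc _ ≤ ∫ y in Ioi 0, exp (ν * y) ^ (-c) :=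
        setIntegral_mono_set (integrableOn_exp_mul_rpow_neg_Ioi hνc)
          (.of_forall fun y => by positivity) Ioc_subset_Ioi_self.eventuallyLE
    _ = 1 / (ν * c) := by
        simp only [exp_mul_rpow_neg, integral_exp_mul_Ioi (neg_neg_of_pos hνc), mul_zero,
          exp_zero, div_neg, neg_div, neg_neg]

lemma abs_hjmDrift_le_s6 {H : Type*} [NormedAddCommGroup H] [InnerProductSpace ℝ H]
    {g : ℝ → ℝ → ℝ → H} {t : ℝ} {f b : ℝ → ℝ} {x : ℝ} (hx : 0 ≤ x)
    (hb : ∀ y, 0 ≤ y → ‖g t y (f y)‖ ≤ b y) (hbint : IntegrableOn b (Ioc 0 x)) :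
    |hjmDrift g t f x| ≤ b x * ∫ y in Ioc 0 x, b y := by
  refine (abs_real_inner_le_norm _ _).trans
    (mul_le_mul (hb x hx) ?_ (norm_nonneg _) ((norm_nonneg _).trans (hb x hx)))
  refine (norm_integral_le_integral_norm _).trans
    (integral_mono_of_nonneg (.of_forall fun y => norm_nonneg _) hbint ?_)
  filter_upwards [ae_restrict_mem measurableSet_Ioc] with y hy
  exact hb y hy.1.le

theorem stmt_6_general {H : Type*} [NormedAddCommGroup H] [InnerProductSpace ℝ H]
    (ν p q : ℝ) (hν : 0 < ν) (hp : 2 ≤ p) (hpq : 1 / p + 1 / q = 1)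
    (g : ℝ → ℝ → ℝ → H)
    (gbar : ℝ → ℝ) (hgbarm : Measurable gbar)
    (hgbar : IntegrableOn (fun x => |gbar x| ^ p * Real.exp (ν * x)) (Ioi 0))
    (hb : ∀ t x u : ℝ, 0 ≤ t → 0 ≤ x → ‖g t x u‖ ≤ |gbar x|)
    (t : ℝ) (ht : 0 ≤ t) (f : ℝ → ℝ) :
    ∀ x : ℝ, 0 ≤ x →
      |hjmDrift g t f x| ≤
        (p / (ν * q)) ^ (1 / q) *
          (∫ y in Ioi (0 : ℝ), |gbar y| ^ p * Real.exp (ν * y)) ^ (1 / p) * |gbar x| := by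
  intro x hx
  have hpq' : p.HolderConjugate q :=
    holderConjugate_iff.mpr ⟨by linarith, by simpa only [one_div] using hpq⟩
  have hq : 0 < q := hpq'.symm.pos
  have hνqp : 0 < ν * (q / p) := mul_pos hν (div_pos hq hpq'.pos)
  have hw : IntegrableOn (fun y => exp (ν * y) ^ (-(q / p))) (Ioc 0 x) :=
    (integrableOn_exp_mul_rpow_neg_Ioi hνqp).mono_set Ioc_subset_Ioi_self
  have hup : IntegrableOn (fun y => |gbar y| ^ p * exp (ν * y)) (Ioc 0 x) :=
    hgbar.mono_set Ioc_subset_Ioi_self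
  have hw_pos y : 0 < exp (ν * y) := exp_pos _
  have hw_meas : Measurable fun y => exp (ν * y) := by fun_prop
  have hw_le : ∫ y in Ioc 0 x, exp (ν * y) ^ (-(q / p)) ≤ p / (ν * q) :=
    (setIntegral_Ioc_exp_mul_rpow_neg_le hνqp x).trans_eq (by field_simp)
  have hup_le : ∫ y in Ioc 0 x, |gbar y| ^ p * exp (ν * y) ≤
      ∫ y in Ioi 0, |gbar y| ^ p * exp (ν * y) :=
    setIntegral_mono_set hgbar (.of_forall fun y => by positivity) Ioc_subset_Ioi_self.eventuallyLE
  calc |hjmDrift g t f x| ≤ |gbar x| * ∫ y in Ioc 0 x, |gbar y| :=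
        abs_hjmDrift_le_s6 hx (fun y hy => hb t y (f y) ht hy)
          (integrable_abs_of_integrable_rpow_mul_weight hpq' hgbarm.aemeasurable
            hw_meas.aemeasurable hw_pos hup hw)
    _ ≤ |gbar x| * ((∫ y in Ioc 0 x, exp (ν * y) ^ (-(q / p))) ^ (1 / q) *
          (∫ y in Ioc 0 x, |gbar y| ^ p * exp (ν * y)) ^ (1 / p)) := by
        gcongr
        exact integral_abs_le_of_integrable_rpow_mul_weight hpq' hgbarm.aemeasurable
          hw_meas.aemeasurable hw_pos hup hw
    _ ≤ |gbar x| * ((p / (ν * q)) ^ (1 / q) *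
          (∫ y in Ioi 0, |gbar y| ^ p * exp (ν * y)) ^ (1 / p)) := by
        gcongr
    _ = _ := by ring

/-- Under the pointwise bound `‖g(t,x,u)‖_H ≤ |ḡ(x)|` with `ḡ ∈ L^p_ν`,
for every `t ≥ 0`, measurable `f ∈ L^p_ν` and `x ≥ 0`,
`|F(t,f)(x)| ≤ (p/(νq))^{1/q} ‖ḡ‖_{ν,p} |ḡ(x)|`. -/
theorem stmt_6 {H : Type*} [NormedAddCommGroup H] [InnerProductSpace ℝ H]
    [CompleteSpace H] [TopologicalSpace.SeparableSpace H]
    (ν p q : ℝ) (hν : 0 < ν) (hp : 2 ≤ p) (hpq : 1 / p + 1 / q = 1)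
    (g : ℝ → ℝ → ℝ → H)
    (hgm : StronglyMeasurable fun z : ℝ × ℝ × ℝ => g z.1 z.2.1 z.2.2)
    (gbar : ℝ → ℝ) (hgbarm : Measurable gbar)
    (hgbar : IntegrableOn (fun x => |gbar x| ^ p * Real.exp (ν * x)) (Ioi 0))
    (hb : ∀ t x u : ℝ, 0 ≤ t → 0 ≤ x → ‖g t x u‖ ≤ |gbar x|)
    (t : ℝ) (ht : 0 ≤ t) (f : ℝ → ℝ) (hfm : Measurable f)
    (hf : IntegrableOn (fun x => |f x| ^ p * Real.exp (ν * x)) (Ioi 0)) :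
    ∀ x : ℝ, 0 ≤ x →
      |hjmDrift g t f x| ≤
        (p / (ν * q)) ^ (1 / q) *
          (∫ y in Ioi (0 : ℝ), |gbar y| ^ p * Real.exp (ν * y)) ^ (1 / p) * |gbar x| :=
  stmt_6_general ν p q hν hp hpq g gbar hgbarm hgbar hb t ht f
end

section
/- Let ν > 0, p ≥ 2 and 1/p + 1/q = 1. Suppose there are functions ḡ ∈ L^p_ν and ĝ ∈ L^p_ν ∩ L^∞([0,∞)) such that for all t, x ∈ [0,∞) and u, v ∈ ℝ: ‖g(t,x,u)‖_H ≤ |ḡ(x)| and ‖g(t,x,u) − g(t,x,v)‖_H ≤ |ĝ(x)| |u − v|. Then for every t ≥ 0, the map F(t,·) : L^p_ν → L^p_ν is globally Lipschitz with constant independent of t: for all f₁, f₂ ∈ L^p_ν, ‖F(t,f₁) − F(t,f₂)‖_{ν,p} ≤ 4 (p/(νq))^{1/q} ‖ĝ‖_{L^∞} ‖ḡ‖_{ν,p} ‖f₁ − f₂‖_{ν,p}. -/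
/-!
With `I_i(x) = ∫_0^x g(t,y,f_i(y)) dy`, the difference of drifts is
`⟨g(t,x,f₁x) − g(t,x,f₂x), I₁(x)⟩ + ⟨g(t,x,f₂x), I₁(x) − I₂(x)⟩`. Hölder's inequality against the
weight `e^{νy}` gives `∫_0^∞ |h| ≤ C ‖h‖_{ν,p}` with `C = (p/(νq))^{1/q}`, so uniformly in `x`
`‖I₁(x)‖ ≤ C ‖ḡ‖_{ν,p}` and `‖I₁(x) − I₂(x)‖ ≤ C ‖ĝ‖_∞ ‖f₁ − f₂‖_{ν,p}`. Hence pointwise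
`|F(t,f₁)(x) − F(t,f₂)(x)| ≤ C ‖ĝ‖_∞ (‖ḡ‖_{ν,p} |f₁ − f₂|(x) + ‖f₁ − f₂‖_{ν,p} |ḡ(x)|)`, and
`(a + b)^p ≤ 2^{p-1} (a^p + b^p)` turns this into the `L^p_ν` bound with constant
`2 C ‖ĝ‖_∞ ≤ 4 C ‖ĝ‖_∞`.
-/

open MeasureTheory Set Real

theorem Real.rpow_add_le_mul_rpow_add_rpow {a b p : ℝ} (ha : 0 ≤ a) (hb : 0 ≤ b) (hp : 1 ≤ p) :
    (a + b) ^ p ≤ 2 ^ (p - 1) * (a ^ p + b ^ p) := by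
  lift a to NNReal using ha
  lift b to NNReal using hb
  exact_mod_cast NNReal.rpow_add_le_mul_rpow_add_rpow a b hp

theorem abs_real_inner_sub_inner_le {H : Type*} [NormedAddCommGroup H] [InnerProductSpace ℝ H]
    (a₁ a₂ b₁ b₂ : H) :
    |inner ℝ a₁ b₁ - inner ℝ a₂ b₂| ≤ ‖a₁ - a₂‖ * ‖b₁‖ + ‖a₂‖ * ‖b₁ - b₂‖ := by
  have hsplit : inner ℝ a₁ b₁ - inner ℝ a₂ b₂ = inner ℝ (a₁ - a₂) b₁ + inner ℝ a₂ (b₁ - b₂) := by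
    simp only [inner_sub_left, inner_sub_right]; ring
  rw [hsplit]
  exact (abs_add_le _ _).trans
    (add_le_add (abs_real_inner_le_norm _ _) (abs_real_inner_le_norm _ _))

theorem ae_abs_le_toReal_eLpNormEssSup {α : Type*} [MeasurableSpace α] {μ : Measure α}
    {f : α → ℝ} (hf : eLpNormEssSup f μ ≠ ⊤) :
    ∀ᵐ x ∂μ, |f x| ≤ (eLpNormEssSup f μ).toReal := by
  filter_upwards [ae_le_eLpNormEssSup (f := f) (μ := μ)] with x hx
  simpa [Real.norm_eq_abs] using ENNReal.toReal_mono hf hx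

def MemWeightedLp (ν p : ℝ) (f : ℝ → ℝ) : Prop :=
  IntegrableOn (fun x => |f x| ^ p * exp (ν * x)) (Ioi 0)

noncomputable def weightedLpNorm (ν p : ℝ) (f : ℝ → ℝ) : ℝ :=
  (∫ x in Ioi (0 : ℝ), |f x| ^ p * exp (ν * x)) ^ (1 / p)

section Weighted

variable {ν p q : ℝ} {f g : ℝ → ℝ}

theorem weightedLpNorm_nonneg : 0 ≤ weightedLpNorm ν p f :=
  rpow_nonneg (setIntegral_nonneg measurableSet_Ioi fun _ _ => by positivity) _

theorem weightedLpNorm_rpow (hp : 0 < p) :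
    weightedLpNorm ν p f ^ p = ∫ x in Ioi (0 : ℝ), |f x| ^ p * exp (ν * x) := by
  rw [weightedLpNorm, one_div]
  exact rpow_inv_rpow (setIntegral_nonneg measurableSet_Ioi fun _ _ => by positivity) hp.ne'

theorem MemWeightedLp.sub (hp : 1 ≤ p) (hfm : Measurable f) (hgm : Measurable g)
    (hf : MemWeightedLp ν p f) (hg : MemWeightedLp ν p g) : MemWeightedLp ν p (f - g) := by
  refine Integrable.mono' ((hf.add hg).const_mul (2 ^ (p - 1))) ?_ (ae_of_all _ fun x => ?_)
  · exact (((hfm.sub hgm).abs.pow_const p).mul (by fun_prop)).aestronglyMeasurable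
  · have hsub : |f x - g x| ^ p ≤ 2 ^ (p - 1) * (|f x| ^ p + |g x| ^ p) :=
      (rpow_le_rpow (abs_nonneg _) (abs_sub _ _) (by linarith)).trans
        (rpow_add_le_mul_rpow_add_rpow (abs_nonneg _) (abs_nonneg _) hp)
    rw [Real.norm_of_nonneg (by positivity)]
    calc |f x - g x| ^ p * exp (ν * x)
        ≤ 2 ^ (p - 1) * (|f x| ^ p + |g x| ^ p) * exp (ν * x) := by gcongr
      _ = _ := by simp only [Pi.add_apply]; ring

/-- Hölder's inequality for `|f| = (|f| e^{νy/p}) · e^{-νy/p}`; the constant is the `L^q` norm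
`(∫_0^∞ e^{-νqy/p} dy)^{1/q}` of the second factor. -/
theorem MemWeightedLp.integrableOn_abs_and_integral_le (hν : 0 < ν) (hpq : p.HolderConjugate q)
    (hfm : Measurable f) (hf : MemWeightedLp ν p f) :
    IntegrableOn (fun y => |f y|) (Ioi 0) ∧
      ∫ y in Ioi (0 : ℝ), |f y| ≤ weightedLpNorm ν p f * (p / (ν * q)) ^ (1 / q) := by
  have hp := hpq.pos
  have hq := hpq.symm.pos
  set F : ℝ → ℝ := fun y => |f y| * exp (ν / p * y)
  set G : ℝ → ℝ := fun y => exp (-(ν / p) * y)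
  have hFG : (fun y => |f y|) = F * G := by
    ext y; simp only [F, G, Pi.mul_apply, mul_assoc, ← exp_add]; ring_nf; simp
  have hFp : ∀ y, F y ^ p = |f y| ^ p * exp (ν * y) := fun y => by
    rw [mul_rpow (abs_nonneg _) (exp_pos _).le, ← exp_mul]; field_simp
  have hGq : ∀ y, G y ^ q = exp (-(ν * q / p) * y) := fun y => by
    rw [← exp_mul]; ring_nf
  have hc : 0 < ν * q / p := by positivity
  have hF : MemLp F (ENNReal.ofReal p) (volume.restrict (Ioi 0)) := by
    rw [← integrable_norm_rpow_iff (by fun_prop) (by simpa using hp) ENNReal.ofReal_ne_top,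
      ENNReal.toReal_ofReal hp.le]
    have hnorm : (fun y => ‖F y‖ ^ p) = fun y => |f y| ^ p * exp (ν * y) :=
      funext fun y => by rw [Real.norm_of_nonneg (by positivity), hFp]
    rw [hnorm]; exact hf
  have hG : MemLp G (ENNReal.ofReal q) (volume.restrict (Ioi 0)) := by
    rw [← integrable_norm_rpow_iff (by fun_prop) (by simpa using hq) ENNReal.ofReal_ne_top,
      ENNReal.toReal_ofReal hq.le]
    have hnorm : (fun y => ‖G y‖ ^ q) = fun y => exp (-(ν * q / p) * y) :=
      funext fun y => by rw [Real.norm_of_nonneg (exp_pos _).le, hGq]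
    rw [hnorm]; exact integrableOn_exp_mul_Ioi (neg_lt_zero.2 hc) 0
  have : ENNReal.HolderConjugate (ENNReal.ofReal p) (ENNReal.ofReal q) := hpq.ennrealOfReal
  refine ⟨hFG ▸ hF.integrable_mul hG, ?_⟩
  have hGint : ∫ y in Ioi (0 : ℝ), G y ^ q = p / (ν * q) := by
    simp only [hGq, integral_exp_mul_Ioi (neg_lt_zero.2 hc), mul_zero, exp_zero]
    field_simp
  calc ∫ y in Ioi (0 : ℝ), |f y| = ∫ y in Ioi (0 : ℝ), F y * G y := by rw [hFG]; rfl
    _ ≤ (∫ y in Ioi (0 : ℝ), F y ^ p) ^ (1 / p) * (∫ y in Ioi (0 : ℝ), G y ^ q) ^ (1 / q) :=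
      integral_mul_le_Lp_mul_Lq_of_nonneg hpq (ae_of_all _ fun _ => by positivity)
        (ae_of_all _ fun _ => (exp_pos _).le) hF hG
    _ = weightedLpNorm ν p f * (p / (ν * q)) ^ (1 / q) := by
      simp only [hFp, hGint, weightedLpNorm]

theorem weightedLpNorm_le_of_integral_le (hp : 0 < p) {M : ℝ} (hM : 0 ≤ M)
    (h : ∫ x in Ioi (0 : ℝ), |f x| ^ p * exp (ν * x) ≤ M ^ p) : weightedLpNorm ν p f ≤ M := by
  calc weightedLpNorm ν p f ≤ (M ^ p) ^ (1 / p) :=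
        rpow_le_rpow (setIntegral_nonneg measurableSet_Ioi fun _ _ => by positivity) h
          (by positivity)
    _ = M := by rw [← rpow_mul hM, mul_one_div_cancel hp.ne', rpow_one]

theorem norm_setIntegral_Ioc_le_weightedLpNorm {H : Type*} [NormedAddCommGroup H]
    [NormedSpace ℝ H] (hν : 0 < ν) (hpq : p.HolderConjugate q) {φ : ℝ → H} {c : ℝ}
    (hc : 0 ≤ c) (hfm : Measurable f) (hf : MemWeightedLp ν p f)
    (hφ : ∀ᵐ y ∂volume.restrict (Ioi 0), ‖φ y‖ ≤ c * |f y|) (x : ℝ) :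
    ‖∫ y in Ioc 0 x, φ y‖ ≤ c * (weightedLpNorm ν p f * (p / (ν * q)) ^ (1 / q)) := by
  obtain ⟨hint, hle⟩ := hf.integrableOn_abs_and_integral_le hν hpq hfm
  calc ‖∫ y in Ioc 0 x, φ y‖ ≤ ∫ y in Ioc 0 x, c * |f y| :=
        norm_integral_le_of_norm_le ((hint.mono_set Ioc_subset_Ioi_self).const_mul c)
          (ae_restrict_of_ae_restrict_of_subset Ioc_subset_Ioi_self hφ)
    _ = c * ∫ y in Ioc 0 x, |f y| := integral_const_mul _ _
    _ ≤ c * ∫ y in Ioi 0, |f y| :=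
      mul_le_mul_of_nonneg_left (setIntegral_mono_set hint (ae_of_all _ fun _ => abs_nonneg _)
        Ioc_subset_Ioi_self.eventuallyLE) hc
    _ ≤ _ := mul_le_mul_of_nonneg_left hle hc

theorem weightedLpNorm_le_of_ae_abs_le (hp : 1 ≤ p) {c : ℝ} (hc : 0 ≤ c) {φ u v : ℝ → ℝ}
    (hu : MemWeightedLp ν p u) (hv : MemWeightedLp ν p v)
    (hφ : ∀ᵐ x ∂volume.restrict (Ioi 0),
      |φ x| ≤ c * (weightedLpNorm ν p v * |u x| + weightedLpNorm ν p u * |v x|)) :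
    weightedLpNorm ν p φ ≤ 2 * c * weightedLpNorm ν p u * weightedLpNorm ν p v := by
  have hp0 : 0 < p := by linarith
  set U := weightedLpNorm ν p u
  set V := weightedLpNorm ν p v
  have hU : 0 ≤ U := weightedLpNorm_nonneg
  have hV : 0 ≤ V := weightedLpNorm_nonneg
  have hpt : ∀ᵐ x ∂volume.restrict (Ioi 0), |φ x| ^ p * exp (ν * x) ≤
      c ^ p * 2 ^ (p - 1) *
        (V ^ p * (|u x| ^ p * exp (ν * x)) + U ^ p * (|v x| ^ p * exp (ν * x))) := by
    filter_upwards [hφ] with x hx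
    calc |φ x| ^ p * exp (ν * x) ≤ (c * (V * |u x| + U * |v x|)) ^ p * exp (ν * x) := by
          gcongr
      _ ≤ c ^ p * (2 ^ (p - 1) * ((V * |u x|) ^ p + (U * |v x|) ^ p)) * exp (ν * x) := by
          rw [mul_rpow hc (by positivity)]
          gcongr
          exact rpow_add_le_mul_rpow_add_rpow (by positivity) (by positivity) hp
      _ = _ := by rw [mul_rpow hV (abs_nonneg _), mul_rpow hU (abs_nonneg _)]; ring
  refine weightedLpNorm_le_of_integral_le hp0 (by positivity) ?_
  calc _ ≤ ∫ x in Ioi (0 : ℝ), c ^ p * 2 ^ (p - 1) *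
          (V ^ p * (|u x| ^ p * exp (ν * x)) + U ^ p * (|v x| ^ p * exp (ν * x))) :=
        integral_mono_of_nonneg (ae_of_all _ fun _ => by positivity)
          (((hu.const_mul _).add (hv.const_mul _)).const_mul _) hpt
    _ = c ^ p * 2 ^ (p - 1) * (V ^ p * U ^ p + U ^ p * V ^ p) := by
      rw [integral_const_mul, integral_add (hu.const_mul _) (hv.const_mul _), integral_const_mul,
        integral_const_mul, ← weightedLpNorm_rpow hp0, ← weightedLpNorm_rpow hp0]
    _ = (2 * c * U * V) ^ p := by
      rw [mul_rpow (by positivity) hV, mul_rpow (by positivity) hU, mul_rpow zero_le_two hc,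
        rpow_sub_one two_ne_zero]
      ring

end Weighted

theorem ae_abs_hjmDrift_sub_le {H : Type*} [NormedAddCommGroup H] [InnerProductSpace ℝ H]
    {ν p q K t : ℝ} {g : ℝ → ℝ → ℝ → H} {gbar f₁ f₂ : ℝ → ℝ}
    (hν : 0 < ν) (hpq : p.HolderConjugate q) (hK : 0 ≤ K)
    (hgm : StronglyMeasurable fun z : ℝ × ℝ => g t z.1 z.2)
    (hgbarm : Measurable gbar) (hgbar : MemWeightedLp ν p gbar)
    (hb : ∀ᵐ x ∂volume.restrict (Ioi 0), ∀ u, ‖g t x u‖ ≤ |gbar x|)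
    (hlip : ∀ᵐ x ∂volume.restrict (Ioi 0), ∀ u v, ‖g t x u - g t x v‖ ≤ K * |u - v|)
    (hf₁m : Measurable f₁) (hf₂m : Measurable f₂) (hΔ : MemWeightedLp ν p (f₁ - f₂)) :
    ∀ᵐ x ∂volume.restrict (Ioi 0), |hjmDrift g t f₁ x - hjmDrift g t f₂ x| ≤
      K * (p / (ν * q)) ^ (1 / q) * (weightedLpNorm ν p gbar * |(f₁ - f₂) x| +
        weightedLpNorm ν p (f₁ - f₂) * |gbar x|) := by
  set C := (p / (ν * q)) ^ (1 / q)
  have hint : ∀ f, Measurable f → ∀ x, IntegrableOn (fun y => g t y (f y)) (Ioc 0 x) := by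
    intro f hf x
    refine Integrable.mono' ((hgbar.integrableOn_abs_and_integral_le hν hpq hgbarm).1.mono_set
      Ioc_subset_Ioi_self) (hgm.comp_measurable (measurable_id.prodMk hf)).aestronglyMeasurable ?_
    filter_upwards [ae_restrict_of_ae_restrict_of_subset Ioc_subset_Ioi_self hb] with y hy
    exact hy (f y)
  have hI₁ (x : ℝ) : ‖∫ y in Ioc 0 x, g t y (f₁ y)‖ ≤ weightedLpNorm ν p gbar * C := by
    simpa only [one_mul] using norm_setIntegral_Ioc_le_weightedLpNorm hν hpq zero_le_one hgbarm
      hgbar (by filter_upwards [hb] with y hy; rw [one_mul]; exact hy _) x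
  have hI₁₂ (x : ℝ) : ‖(∫ y in Ioc 0 x, g t y (f₁ y)) - ∫ y in Ioc 0 x, g t y (f₂ y)‖ ≤
      K * (weightedLpNorm ν p (f₁ - f₂) * C) := by
    rw [← integral_sub (hint f₁ hf₁m x) (hint f₂ hf₂m x)]
    exact norm_setIntegral_Ioc_le_weightedLpNorm hν hpq hK (hf₁m.sub hf₂m) hΔ
      (by filter_upwards [hlip] with y hy; exact hy _ _) x
  filter_upwards [hb, hlip] with x hbx hlipx
  calc |hjmDrift g t f₁ x - hjmDrift g t f₂ x|
      ≤ ‖g t x (f₁ x) - g t x (f₂ x)‖ * ‖∫ y in Ioc 0 x, g t y (f₁ y)‖ +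
          ‖g t x (f₂ x)‖ * ‖(∫ y in Ioc 0 x, g t y (f₁ y)) - ∫ y in Ioc 0 x, g t y (f₂ y)‖ :=
        abs_real_inner_sub_inner_le _ _ _ _
    _ ≤ K * |f₁ x - f₂ x| * (weightedLpNorm ν p gbar * C) +
          |gbar x| * (K * (weightedLpNorm ν p (f₁ - f₂) * C)) := by
        gcongr
        · exact hlipx _ _
        · exact hI₁ x
        · exact hbx _
        · exact hI₁₂ x
    _ = _ := by simp only [Pi.sub_apply]; ring

theorem stmt_7_general {H : Type*} [NormedAddCommGroup H] [InnerProductSpace ℝ H]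
    (ν p q : ℝ) (hν : 0 < ν) (hp : 2 ≤ p) (hpq : 1 / p + 1 / q = 1)
    (g : ℝ → ℝ → ℝ → H)
    (hgm : StronglyMeasurable fun z : ℝ × ℝ × ℝ => g z.1 z.2.1 z.2.2)
    (gbar ghat : ℝ → ℝ) (hgbarm : Measurable gbar)
    (hgbar : IntegrableOn (fun x => |gbar x| ^ p * Real.exp (ν * x)) (Ioi 0))
    (hghatInf : eLpNormEssSup ghat (volume.restrict (Ioi 0)) ≠ ⊤)
    (hb : ∀ t x u : ℝ, 0 ≤ t → 0 ≤ x → ‖g t x u‖ ≤ |gbar x|)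
    (hlip : ∀ t x u v : ℝ, 0 ≤ t → 0 ≤ x → ‖g t x u - g t x v‖ ≤ |ghat x| * |u - v|)
    (t : ℝ) (ht : 0 ≤ t) (f₁ f₂ : ℝ → ℝ) (hf₁m : Measurable f₁) (hf₂m : Measurable f₂)
    (hf₁ : IntegrableOn (fun x => |f₁ x| ^ p * Real.exp (ν * x)) (Ioi 0))
    (hf₂ : IntegrableOn (fun x => |f₂ x| ^ p * Real.exp (ν * x)) (Ioi 0)) :
    (∫ x in Ioi (0 : ℝ), |hjmDrift g t f₁ x - hjmDrift g t f₂ x| ^ p *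
        Real.exp (ν * x)) ^ (1 / p) ≤
      4 * (p / (ν * q)) ^ (1 / q) *
        (eLpNormEssSup ghat (volume.restrict (Ioi 0))).toReal *
        (∫ x in Ioi (0 : ℝ), |gbar x| ^ p * Real.exp (ν * x)) ^ (1 / p) *
        (∫ x in Ioi (0 : ℝ), |f₁ x - f₂ x| ^ p * Real.exp (ν * x)) ^ (1 / p) := by
  have hpq' : p.HolderConjugate q :=
    Real.holderConjugate_iff.2 ⟨by linarith, by simpa only [one_div] using hpq⟩
  set C := (p / (ν * q)) ^ (1 / q)
  set K := (eLpNormEssSup ghat (volume.restrict (Ioi 0))).toReal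
  have hK : 0 ≤ K := ENNReal.toReal_nonneg
  have hC : 0 ≤ C := rpow_nonneg (div_nonneg hpq'.nonneg (mul_nonneg hν.le hpq'.symm.nonneg)) _
  have hb' : ∀ᵐ x ∂volume.restrict (Ioi 0), ∀ u, ‖g t x u‖ ≤ |gbar x| := by
    filter_upwards [ae_restrict_mem measurableSet_Ioi] with x hx u
    exact hb t x u ht (le_of_lt hx)
  have hlip' : ∀ᵐ x ∂volume.restrict (Ioi 0), ∀ u v, ‖g t x u - g t x v‖ ≤ K * |u - v| := by
    filter_upwards [ae_restrict_mem measurableSet_Ioi, ae_abs_le_toReal_eLpNormEssSup hghatInf]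
      with x hx hKx u v
    exact (hlip t x u v ht (le_of_lt hx)).trans (by gcongr)
  have hΔ : MemWeightedLp ν p (f₁ - f₂) := MemWeightedLp.sub (by linarith) hf₁m hf₂m hf₁ hf₂
  have hdrift := weightedLpNorm_le_of_ae_abs_le (by linarith) (mul_nonneg hK hC) hΔ hgbar <|
    ae_abs_hjmDrift_sub_le hν hpq' hK (hgm.comp_measurable (measurable_const.prodMk measurable_id))
      hgbarm hgbar hb' hlip' hf₁m hf₂m hΔ
  change weightedLpNorm ν p _ ≤
    4 * C * K * weightedLpNorm ν p gbar * weightedLpNorm ν p (f₁ - f₂)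
  have hprod : 0 ≤ K * C * weightedLpNorm ν p (f₁ - f₂) * weightedLpNorm ν p gbar :=
    mul_nonneg (mul_nonneg (mul_nonneg hK hC) weightedLpNorm_nonneg)
      weightedLpNorm_nonneg
  linarith

/-- Under `‖g(t,x,u)‖_H ≤ |ḡ(x)|` and
`‖g(t,x,u) − g(t,x,v)‖_H ≤ |ĝ(x)| |u − v|` with `ḡ ∈ L^p_ν` and `ĝ ∈ L^p_ν ∩ L^∞`,
the map `F(t,·)` is globally Lipschitz on `L^p_ν`, uniformly in `t`:
`‖F(t,f₁) − F(t,f₂)‖_{ν,p} ≤ 4 (p/(νq))^{1/q} ‖ĝ‖_{L^∞} ‖ḡ‖_{ν,p} ‖f₁ − f₂‖_{ν,p}`. -/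
theorem stmt_7 {H : Type*} [NormedAddCommGroup H] [InnerProductSpace ℝ H]
    [CompleteSpace H] [TopologicalSpace.SeparableSpace H]
    (ν p q : ℝ) (hν : 0 < ν) (hp : 2 ≤ p) (hpq : 1 / p + 1 / q = 1)
    (g : ℝ → ℝ → ℝ → H)
    (hgm : StronglyMeasurable fun z : ℝ × ℝ × ℝ => g z.1 z.2.1 z.2.2)
    (gbar ghat : ℝ → ℝ) (hgbarm : Measurable gbar) (hghatm : Measurable ghat)
    (hgbar : IntegrableOn (fun x => |gbar x| ^ p * Real.exp (ν * x)) (Ioi 0))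
    (hghat : IntegrableOn (fun x => |ghat x| ^ p * Real.exp (ν * x)) (Ioi 0))
    (hghatInf : eLpNormEssSup ghat (volume.restrict (Ioi 0)) ≠ ⊤)
    (hb : ∀ t x u : ℝ, 0 ≤ t → 0 ≤ x → ‖g t x u‖ ≤ |gbar x|)
    (hlip : ∀ t x u v : ℝ, 0 ≤ t → 0 ≤ x → ‖g t x u - g t x v‖ ≤ |ghat x| * |u - v|)
    (t : ℝ) (ht : 0 ≤ t) (f₁ f₂ : ℝ → ℝ) (hf₁m : Measurable f₁) (hf₂m : Measurable f₂)
    (hf₁ : IntegrableOn (fun x => |f₁ x| ^ p * Real.exp (ν * x)) (Ioi 0))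
    (hf₂ : IntegrableOn (fun x => |f₂ x| ^ p * Real.exp (ν * x)) (Ioi 0)) :
    (∫ x in Ioi (0 : ℝ), |hjmDrift g t f₁ x - hjmDrift g t f₂ x| ^ p *
        Real.exp (ν * x)) ^ (1 / p) ≤
      4 * (p / (ν * q)) ^ (1 / q) *
        (eLpNormEssSup ghat (volume.restrict (Ioi 0))).toReal *
        (∫ x in Ioi (0 : ℝ), |gbar x| ^ p * Real.exp (ν * x)) ^ (1 / p) *
        (∫ x in Ioi (0 : ℝ), |f₁ x - f₂ x| ^ p * Real.exp (ν * x)) ^ (1 / p) :=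
  stmt_7_general ν p q hν hp hpq g hgm gbar ghat hgbarm hgbar hghatInf hb hlip t ht f₁ f₂ hf₁m hf₂m
    hf₁ hf₂
end
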